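/- Let ℓ ≥ 2, let j be odd with 1 ≤ j ≤ ℓ, and let w = (w₁, w₂, …, w_{2ℓ}) ∈ 𝔽₄^{2ℓ} with w₂ ≠ 0. If χ_w(O₀) = −1 − 4^{ℓ−1}, then χ_w(Z_{ℓ,j} \ O₀) = 2·4^{ℓ−1} or χ_w(Z_{ℓ,j} \ O₀) = −2·4^{ℓ−1}. -/

import Mathlib

/-- The quadratic form `Q_{ℓ,j}(x₁,…,x_{2ℓ}) = Σ_{i=1}^{j} (α x_{2i-1}² + x_{2i-1}x_{2i} + x_{2i}²)
+ Σ_{i=j+1}^{ℓ} x_{2i-1}x_{2i}`  (coordinates are 0-indexed in Lean). -/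
def Qform {F4 : Type*} [Field F4] (α : F4) (ℓ j : ℕ) (x : Fin (2 * ℓ) → F4) : F4 :=
  ∑ i : Fin ℓ,
    (let a := x ⟨2 * i.val, by have := i.isLt; omega⟩
     let b := x ⟨2 * i.val + 1, by have := i.isLt; omega⟩
     if i.val < j then α * a ^ 2 + a * b + b ^ 2 else a * b)

open scoped Classical in
/-- The value `(-1)^{tr(t)} ∈ ℂ`, where `tr : 𝔽₄ → 𝔽₂`, `tr(t) = t + t²`, is the trace map. -/
noncomputable def chi4 {F4 : Type*} [Field F4] (t : F4) : ℂ :=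
  if t + t ^ 2 = 0 then 1 else -1

/-- The character sum `χ_w(S) = Σ_{v ∈ S} (-1)^{tr(Σ_i w_i v_i)}`. -/
noncomputable def chiSum {F4 : Type*} [Field F4] {m : ℕ} (w : Fin m → F4)
    (S : Set (Fin m → F4)) : ℂ :=
  ∑ᶠ v ∈ S, chi4 (∑ i, w i * v i)

/-! Let `N` be the sum of `χ_w` over the whole quadric `{Q = 0}`, including `0`. Orthogonality of
the trace character gives `4 N = ∑_t ∑_v χ(t Q(v) + w·v)`. The term `t = 0` vanishes because
`w ≠ 0`. For `t ≠ 0` the sum factors over the `ℓ` binary blocks of `Q`, and each block sum is a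
Gauss sum equal to `4 χ(·)`; in an anisotropic block the squares are first linearised using the
Frobenius invariance of the trace. As `j` is odd, the product is `-4^ℓ χ(s t)` for some `s`
depending only on `w`, so `N = 4^(ℓ-1)` or `N = -3·4^(ℓ-1)` according as `s ≠ 0` or `s = 0`.
Finally `χ_w(Z \ O₀) = (N - 1) - χ_w(O₀) = N + 4^(ℓ-1)`. -/

section PairIndexing

def finTwoMulEquiv (ℓ : ℕ) : Fin ℓ × Fin 2 ≃ Fin (2 * ℓ) :=
  finProdFinEquiv.trans (finCongr (mul_comm ℓ 2))

theorem finTwoMulEquiv_apply_zero {ℓ : ℕ} (i : Fin ℓ) :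
    finTwoMulEquiv ℓ (i, 0) = ⟨2 * i, by omega⟩ := by
  ext
  simp [finTwoMulEquiv]

theorem finTwoMulEquiv_apply_one {ℓ : ℕ} (i : Fin ℓ) :
    finTwoMulEquiv ℓ (i, 1) = ⟨2 * i + 1, by omega⟩ := by
  ext
  simp [finTwoMulEquiv, add_comm]

theorem Fin.sum_univ_two_mul {M : Type*} [AddCommMonoid M] {ℓ : ℕ} (f : Fin (2 * ℓ) → M) :
    ∑ k, f k = ∑ i : Fin ℓ, (f ⟨2 * i, by omega⟩ + f ⟨2 * i + 1, by omega⟩) := by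
  rw [← (finTwoMulEquiv ℓ).sum_comp, Fintype.sum_prod_type]
  simp [finTwoMulEquiv_apply_zero, finTwoMulEquiv_apply_one]

theorem Fin.sum_pi_prod_pairs {R β : Type*} [CommSemiring R] [Fintype β] [DecidableEq β]
    {ℓ : ℕ} (f : Fin ℓ → β → β → R) :
    ∑ v : Fin (2 * ℓ) → β, ∏ i : Fin ℓ, f i (v ⟨2 * i, by omega⟩) (v ⟨2 * i + 1, by omega⟩) =
      ∏ i : Fin ℓ, ∑ a, ∑ b, f i a b := by
  let e : (Fin ℓ → β × β) ≃ (Fin (2 * ℓ) → β) :=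
    ((Equiv.arrowCongr (Equiv.refl _) (finTwoArrowEquiv β).symm).trans
      (Equiv.curry _ _ _).symm).trans (Equiv.arrowCongr (finTwoMulEquiv ℓ) (Equiv.refl β))
  have he : ∀ (g : Fin ℓ → β × β) (i : Fin ℓ),
      e g ⟨2 * i, by omega⟩ = (g i).1 ∧ e g ⟨2 * i + 1, by omega⟩ = (g i).2 := by
    intro g i
    rw [← finTwoMulEquiv_apply_zero, ← finTwoMulEquiv_apply_one]
    simp [e]
  rw [← e.sum_comp]
  simp only [he]
  rw [← Fintype.prod_sum fun i (p : β × β) => f i p.1 p.2]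
  simp only [Fintype.sum_prod_type]

end PairIndexing

section FieldOfCardFour

variable {F4 : Type*} [Field F4] [Fintype F4]

theorem two_eq_zero_of_card_eq_four (hc : Fintype.card F4 = 4) : (2 : F4) = 0 := by
  have h : ((4 : ℕ) : F4) = 0 := hc ▸ FiniteField.cast_card_eq_zero F4
  exact mul_self_eq_zero.mp (by push_cast at h; linear_combination h)

theorem pow_four_of_card_eq_four (hc : Fintype.card F4 = 4) (x : F4) : x ^ 4 = x :=
  hc ▸ FiniteField.pow_card x

theorem pow_three_of_card_eq_four (hc : Fintype.card F4 = 4) {x : F4} (hx : x ≠ 0) :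
    x ^ 3 = 1 := by
  simpa [hc] using FiniteField.pow_card_sub_one_eq_one x hx

theorem trace_eq_zero_or_one (hc : Fintype.card F4 = 4) (x : F4) :
    x + x ^ 2 = 0 ∨ x + x ^ 2 = 1 := by
  have h2 := two_eq_zero_of_card_eq_four hc
  have key : (x + x ^ 2) * (x + x ^ 2 - 1) = 0 := by
    linear_combination pow_four_of_card_eq_four hc x + x ^ 3 * h2
  rcases mul_eq_zero.1 key with h | h
  · exact Or.inl h
  · exact Or.inr (sub_eq_zero.1 h)

end FieldOfCardFour

theorem chi4_zero {F4 : Type*} [Field F4] : chi4 (0 : F4) = 1 := by simp [chi4]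

section TraceCharacter

variable {F4 : Type*} [Field F4] [Fintype F4]

theorem chi4_add (hc : Fintype.card F4 = 4) (s t : F4) :
    chi4 (s + t) = chi4 s * chi4 t := by
  have h2 := two_eq_zero_of_card_eq_four hc
  have key : (s + t) + (s + t) ^ 2 = (s + s ^ 2) + (t + t ^ 2) := by
    linear_combination (s * t) * h2
  rcases trace_eq_zero_or_one hc s with hs | hs <;>
    rcases trace_eq_zero_or_one hc t with ht | ht <;>
    simp [chi4, key, hs, ht, one_add_one_eq_two, h2]

theorem chi4_sum (hc : Fintype.card F4 = 4) {ι : Type*} (s : Finset ι) (f : ι → F4) :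
    chi4 (∑ i ∈ s, f i) = ∏ i ∈ s, chi4 (f i) := by
  induction s using Finset.cons_induction with
  | empty => exact chi4_zero
  | cons a s ha ih => rw [Finset.sum_cons, Finset.prod_cons, chi4_add hc, ih]

-- The trace is invariant under the Frobenius `x ↦ x ^ 2`.
theorem chi4_mul_sq (hc : Fintype.card F4 = 4) (s a : F4) :
    chi4 (s * a ^ 2) = chi4 (s ^ 2 * a) := by
  have key : s * a ^ 2 + (s * a ^ 2) ^ 2 = s ^ 2 * a + (s ^ 2 * a) ^ 2 := by
    linear_combination s ^ 2 * pow_four_of_card_eq_four hc a -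
      a ^ 2 * pow_four_of_card_eq_four hc s
  rw [chi4, chi4, key]

theorem exists_chi4_eq_neg_one (hc : Fintype.card F4 = 4) : ∃ y : F4, chi4 y = -1 := by
  classical
  obtain ⟨y, -, hy⟩ := Finset.exists_mem_notMem_of_card_lt_card
    (s := ({0, 1} : Finset F4)) (t := Finset.univ)
    (by rw [Finset.card_univ, hc]; exact (Finset.card_le_two).trans_lt (by norm_num))
  simp only [Finset.mem_insert, Finset.mem_singleton, not_or] at hy
  have hy1 : y + 1 ≠ 0 := fun h =>
    hy.2 (by linear_combination h - two_eq_zero_of_card_eq_four hc)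
  have htr : y + y ^ 2 ≠ 0 := by
    rw [show y + y ^ 2 = y * (y + 1) by ring]
    exact mul_ne_zero hy.1 hy1
  exact ⟨y, by simp [chi4, htr]⟩

theorem sum_chi4 (hc : Fintype.card F4 = 4) : ∑ x : F4, chi4 x = 0 := by
  obtain ⟨y, hy⟩ := exists_chi4_eq_neg_one hc
  have hshift : ∑ x : F4, chi4 x = chi4 y * ∑ x : F4, chi4 x := by
    rw [Finset.mul_sum]
    exact (Fintype.sum_equiv (Equiv.addLeft y) _ _ fun x => (chi4_add hc y x).symm).symm
  rw [hy] at hshift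
  linear_combination hshift / 2

theorem sum_chi4_mul (hc : Fintype.card F4 = 4) (s : F4) [Decidable (s = 0)] :
    ∑ x : F4, chi4 (s * x) = if s = 0 then 4 else 0 := by
  split_ifs with hs
  · simp [hs, chi4_zero, hc]
  · rw [Fintype.sum_bijective _ (mulLeft_bijective₀ s hs) _ chi4 fun _ => rfl, sum_chi4 hc]

theorem sum_chi4_dot (hc : Fintype.card F4 = 4) {ι : Type*} [Fintype ι] [DecidableEq ι]
    {w : ι → F4} (hw : w ≠ 0) : ∑ v : ι → F4, chi4 (∑ i, w i * v i) = 0 := by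
  classical
  simp only [chi4_sum hc]
  rw [← Fintype.prod_sum fun i x => chi4 (w i * x)]
  obtain ⟨i, hi⟩ := Function.ne_iff.1 hw
  refine Finset.prod_eq_zero (Finset.mem_univ i) ?_
  rw [sum_chi4_mul hc, if_neg (by simpa using hi)]

end TraceCharacter

section BlockSums

variable {F4 : Type*} [Field F4] [Fintype F4]

theorem sum_chi4_hyperbolic (hc : Fintype.card F4 = 4) {t : F4} (ht : t ≠ 0) (c d : F4) :
    ∑ a : F4, ∑ b : F4, chi4 (t * (a * b) + c * a + d * b) = 4 * chi4 (t ^ 2 * (c * d)) := by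
  classical
  have h2 := two_eq_zero_of_card_eq_four hc
  have ht3 := pow_three_of_card_eq_four hc ht
  have hinner : ∀ a : F4, ∑ b : F4, chi4 (t * (a * b) + c * a + d * b) =
      if a = t ^ 2 * d then 4 * chi4 (t ^ 2 * (c * d)) else 0 := by
    intro a
    have hroot : t * a + d = 0 ↔ a = t ^ 2 * d :=
      ⟨fun h => by linear_combination t ^ 2 * h - a * ht3 - t ^ 2 * d * h2,
        fun h => by linear_combination t * h + d * ht3 + d * h2⟩
    calc ∑ b : F4, chi4 (t * (a * b) + c * a + d * b)
        = ∑ b : F4, chi4 (c * a) * chi4 ((t * a + d) * b) := by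
          refine Finset.sum_congr rfl fun b _ => ?_
          rw [← chi4_add hc]
          congr 1
          ring
      _ = chi4 (c * a) * if a = t ^ 2 * d then 4 else 0 := by
          rw [← Finset.mul_sum, sum_chi4_mul hc, if_congr hroot rfl rfl]
      _ = _ := by
          split_ifs with ha
          · rw [ha, mul_comm, ← mul_assoc, mul_comm c, mul_assoc]
          · rw [mul_zero]
  simp only [hinner, Finset.sum_ite_eq', Finset.mem_univ, if_true]

theorem sum_chi4_anisotropic (hc : Fintype.card F4 = 4) (α : F4) {t : F4} (ht : t ≠ 0)
    (c d : F4) :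
    ∑ a : F4, ∑ b : F4, chi4 (t * (α * a ^ 2 + a * b + b ^ 2) + c * a + d * b) =
      4 * chi4 (α ^ 2 + t * (α ^ 2 * d + c) + t ^ 2 * (c * d)) := by
  have hlin : ∀ a b : F4, chi4 (t * (α * a ^ 2 + a * b + b ^ 2) + c * a + d * b) =
      chi4 (t * (a * b) + (t ^ 2 * α ^ 2 + c) * a + (t ^ 2 + d) * b) := by
    intro a b
    calc chi4 (t * (α * a ^ 2 + a * b + b ^ 2) + c * a + d * b)
        = chi4 ((t * α) * a ^ 2) * chi4 (t * b ^ 2) * chi4 (t * (a * b) + c * a + d * b) := by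
          rw [← chi4_add hc, ← chi4_add hc]
          congr 1
          ring
      _ = chi4 ((t * α) ^ 2 * a) * chi4 (t ^ 2 * b) * chi4 (t * (a * b) + c * a + d * b) := by
          rw [chi4_mul_sq hc, chi4_mul_sq hc]
      _ = _ := by
          rw [← chi4_add hc, ← chi4_add hc]
          congr 1
          ring
  simp only [hlin, sum_chi4_hyperbolic hc ht]
  congr 2
  linear_combination (α ^ 2 * (t ^ 3 + 1) + α ^ 2 * d * t + c * t) *
    pow_three_of_card_eq_four hc ht

end BlockSums

section QuadraticForm

variable {F4 : Type*} [Field F4]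

def Qblock (α : F4) (j i : ℕ) (a b : F4) : F4 :=
  if i < j then α * a ^ 2 + a * b + b ^ 2 else a * b

theorem Qform_eq_sum_Qblock (α : F4) (ℓ j : ℕ) (x : Fin (2 * ℓ) → F4) :
    Qform α ℓ j x = ∑ i : Fin ℓ, Qblock α j i (x ⟨2 * i, by omega⟩) (x ⟨2 * i + 1, by omega⟩) :=
  rfl

def blockPhase (α t : F4) (j i : ℕ) (c d : F4) : F4 :=
  (if i < j then α ^ 2 + t * (α ^ 2 * d + c) else 0) + t ^ 2 * (c * d)

variable [Fintype F4]

theorem sum_chi4_Qblock (hc : Fintype.card F4 = 4) (α : F4) {t : F4} (ht : t ≠ 0)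
    (j i : ℕ) (c d : F4) :
    ∑ a : F4, ∑ b : F4, chi4 (t * Qblock α j i a b + c * a + d * b) =
      4 * chi4 (blockPhase α t j i c d) := by
  unfold Qblock blockPhase
  split_ifs
  · exact sum_chi4_anisotropic hc α ht c d
  · rw [zero_add]
    exact sum_chi4_hyperbolic hc ht c d

theorem sum_chi4_mul_Qform_add_dot (hc : Fintype.card F4 = 4) (α : F4) {t : F4} (ht : t ≠ 0)
    {ℓ : ℕ} (j : ℕ) (w : Fin (2 * ℓ) → F4) :
    ∑ v : Fin (2 * ℓ) → F4, chi4 (t * Qform α ℓ j v + ∑ k, w k * v k) =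
      4 ^ ℓ * chi4 (∑ i : Fin ℓ,
        blockPhase α t j i (w ⟨2 * i, by omega⟩) (w ⟨2 * i + 1, by omega⟩)) := by
  classical
  have hsplit : ∀ v : Fin (2 * ℓ) → F4, t * Qform α ℓ j v + ∑ k, w k * v k =
      ∑ i : Fin ℓ, (t * Qblock α j i (v ⟨2 * i, by omega⟩) (v ⟨2 * i + 1, by omega⟩) +
        w ⟨2 * i, by omega⟩ * v ⟨2 * i, by omega⟩ +
        w ⟨2 * i + 1, by omega⟩ * v ⟨2 * i + 1, by omega⟩) := by
    intro v
    rw [Qform_eq_sum_Qblock, Finset.mul_sum, Fin.sum_univ_two_mul, ← Finset.sum_add_distrib]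
    exact Finset.sum_congr rfl fun i _ => by ring
  simp only [hsplit, chi4_sum hc]
  rw [Fin.sum_pi_prod_pairs fun i a b =>
    chi4 (t * Qblock α j i a b + w ⟨2 * i, by omega⟩ * a + w ⟨2 * i + 1, by omega⟩ * b)]
  simp only [sum_chi4_Qblock hc α ht, Finset.prod_mul_distrib, Finset.prod_const,
    Finset.card_univ, Fintype.card_fin, ← chi4_sum hc]

end QuadraticForm

section CharacterSums

variable {F4 : Type*} [Field F4] [Fintype F4]

theorem chi4_sq_of_sq_eq_add_one (hc : Fintype.card F4 = 4) {α : F4} (hα : α ^ 2 = α + 1) :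
    chi4 (α ^ 2) = -1 := by
  have htr : α ^ 2 + (α ^ 2) ^ 2 = 1 := by
    linear_combination
      pow_four_of_card_eq_four hc α + hα + α * two_eq_zero_of_card_eq_four hc
  simp [chi4, htr]

theorem Fin.sum_ite_val_lt_of_odd {M : Type*} [AddCommMonoid M] {ℓ j : ℕ} (hj : Odd j)
    (hjl : j ≤ ℓ) {a : M} (ha : a + a = 0) : ∑ i : Fin ℓ, (if (i : ℕ) < j then a else 0) = a := by
  rw [← Finset.sum_filter, Finset.sum_const, Fin.card_filter_val_lt, min_eq_right hjl]
  obtain ⟨m, rfl⟩ := hj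
  rw [add_nsmul, one_nsmul, mul_comm, mul_nsmul, two_nsmul, ← nsmul_add, ha, nsmul_zero,
    zero_add]

theorem exists_chi4_sum_blockPhase (hc : Fintype.card F4 = 4) {α : F4} (hα : α ^ 2 = α + 1)
    {ℓ j : ℕ} (hj : Odd j) (hjl : j ≤ ℓ) (c d : Fin ℓ → F4) :
    ∃ s : F4, ∀ t : F4, chi4 (∑ i : Fin ℓ, blockPhase α t j i (c i) (d i)) = -chi4 (s * t) := by
  have h2 := two_eq_zero_of_card_eq_four hc
  set L := ∑ i : Fin ℓ, if (i : ℕ) < j then α ^ 2 * d i + c i else 0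
  set U := ∑ i : Fin ℓ, c i * d i
  refine ⟨L + U ^ 2, fun t => ?_⟩
  have hsum : ∑ i : Fin ℓ, blockPhase α t j i (c i) (d i) = α ^ 2 + (L * t + U * t ^ 2) := by
    have hblock : ∀ i : Fin ℓ, blockPhase α t j i (c i) (d i) =
        (if (i : ℕ) < j then α ^ 2 else 0) +
          t * (if (i : ℕ) < j then α ^ 2 * d i + c i else 0) + t ^ 2 * (c i * d i) := by
      intro i
      unfold blockPhase
      split_ifs <;> ring
    simp only [hblock, Finset.sum_add_distrib, ← Finset.mul_sum,
      Fin.sum_ite_val_lt_of_odd hj hjl (show α ^ 2 + α ^ 2 = 0 by linear_combination α ^ 2 * h2)]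
    ring
  rw [hsum, chi4_add hc, chi4_sq_of_sq_eq_add_one hc hα, chi4_add hc, chi4_mul_sq hc,
    ← chi4_add hc, ← add_mul]
  ring

theorem exists_sum_chi4_mul_Qform_add_dot (hc : Fintype.card F4 = 4) {α : F4}
    (hα : α ^ 2 = α + 1) {ℓ j : ℕ} (hj : Odd j) (hjl : j ≤ ℓ) (w : Fin (2 * ℓ) → F4) :
    ∃ s : F4, ∀ t : F4, t ≠ 0 →
      ∑ v : Fin (2 * ℓ) → F4, chi4 (t * Qform α ℓ j v + ∑ k, w k * v k) =
        -4 ^ ℓ * chi4 (s * t) := by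
  obtain ⟨s, hs⟩ := exists_chi4_sum_blockPhase hc hα hj hjl
    (fun i => w ⟨2 * i, by omega⟩) (fun i => w ⟨2 * i + 1, by omega⟩)
  exact ⟨s, fun t ht => by rw [sum_chi4_mul_Qform_add_dot hc α ht, hs]; ring⟩

theorem sum_chi4_of_Qform_eq_zero [DecidableEq F4] (hc : Fintype.card F4 = 4) {α : F4}
    (hα : α ^ 2 = α + 1) {ℓ j : ℕ} (hℓ : 1 ≤ ℓ) (hj : Odd j) (hjl : j ≤ ℓ)
    {w : Fin (2 * ℓ) → F4} (hw : w ≠ 0) :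
    ∑ v : Fin (2 * ℓ) → F4, (if Qform α ℓ j v = 0 then chi4 (∑ k, w k * v k) else 0) =
        4 ^ (ℓ - 1) ∨
      ∑ v : Fin (2 * ℓ) → F4, (if Qform α ℓ j v = 0 then chi4 (∑ k, w k * v k) else 0) =
        -3 * 4 ^ (ℓ - 1) := by
  obtain ⟨s, hs⟩ := exists_sum_chi4_mul_Qform_add_dot hc hα hj hjl w
  have horth : ∀ v : Fin (2 * ℓ) → F4,
      4 * (if Qform α ℓ j v = 0 then chi4 (∑ k, w k * v k) else 0) =
        ∑ t : F4, chi4 (t * Qform α ℓ j v + ∑ k, w k * v k) := by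
    intro v
    simp only [chi4_add hc, ← Finset.sum_mul, mul_comm _ (Qform α ℓ j v), sum_chi4_mul hc]
    split_ifs <;> ring
  have hinner : ∀ t : F4, ∑ v : Fin (2 * ℓ) → F4, chi4 (t * Qform α ℓ j v + ∑ k, w k * v k) =
      -4 ^ ℓ * (chi4 (s * t) - if t = 0 then 1 else 0) := by
    intro t
    by_cases ht : t = 0
    · simp [ht, sum_chi4_dot hc hw, chi4_zero]
    · rw [hs t ht, if_neg ht, sub_zero]
  have hcount : 4 * ∑ v : Fin (2 * ℓ) → F4,
      (if Qform α ℓ j v = 0 then chi4 (∑ k, w k * v k) else 0) =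
        -4 ^ ℓ * ((if s = 0 then 4 else 0) - 1) := by
    rw [Finset.mul_sum, Finset.sum_congr rfl fun v _ => horth v, Finset.sum_comm,
      Finset.sum_congr rfl fun t _ => hinner t, ← Finset.mul_sum, Finset.sum_sub_distrib,
      sum_chi4_mul hc, Finset.sum_ite_eq' Finset.univ (0 : F4), if_pos (Finset.mem_univ _)]
  have hpow : (4 : ℂ) ^ ℓ = 4 * 4 ^ (ℓ - 1) := by
    rw [← pow_succ', Nat.sub_add_cancel hℓ]
  rw [hpow] at hcount
  split_ifs at hcount
  · right
    linear_combination hcount / 4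
  · left
    linear_combination hcount / 4

end CharacterSums

section ChiSum

variable {F4 : Type*} [Field F4] {m : ℕ} (w : Fin m → F4)

theorem chiSum_add_chiSum_sdiff [Finite F4] {s t : Set (Fin m → F4)} (h : s ⊆ t) :
    chiSum w s + chiSum w (t \ s) = chiSum w t :=
  finsum_mem_add_sdiff h t.toFinite

theorem chiSum_setOf [Fintype F4] (p : (Fin m → F4) → Prop) [DecidablePred p] :
    chiSum w {x | p x} = ∑ x : Fin m → F4, if p x then chi4 (∑ i, w i * x i) else 0 := by
  rw [chiSum, finsum_mem_def, finsum_eq_sum_of_fintype]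
  simp [Set.indicator_apply]

theorem chiSum_singleton_zero : chiSum w {0} = 1 := by
  simp [chiSum, chi4_zero]

end ChiSum

theorem stmt12 (F4 : Type*) [Field F4] [Fintype F4] (hc : Fintype.card F4 = 4)
    (α : F4) (hα : α ^ 2 = α + 1)
    (ℓ j : ℕ) (hℓ : 2 ≤ ℓ) (hjodd : Odd j) (hjl : j ≤ ℓ)
    (Z : Set (Fin (2 * ℓ) → F4)) (hZ : Z = {x | x ≠ 0 ∧ Qform α ℓ j x = 0})
    (O₀ : Set (Fin (2 * ℓ) → F4)) (hO₀ : O₀ = {x ∈ Z | x ⟨0, by omega⟩ = 0})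
    (w : Fin (2 * ℓ) → F4) (hw : w ⟨1, by omega⟩ ≠ 0)
    (hval : chiSum w O₀ = -1 - 4 ^ (ℓ - 1)) :
    chiSum w (Z \ O₀) = 2 * 4 ^ (ℓ - 1) ∨ chiSum w (Z \ O₀) = -(2 * 4 ^ (ℓ - 1)) := by
  classical
  have hQ0 : ({0} : Set (Fin (2 * ℓ) → F4)) ⊆ {x | Qform α ℓ j x = 0} := by
    simp [Qform]
  have hZ' : Z = {x | Qform α ℓ j x = 0} \ {0} := by
    ext x
    simp [hZ, and_comm]
  have hZsum := chiSum_add_chiSum_sdiff w hQ0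
  rw [← hZ', chiSum_singleton_zero, chiSum_setOf] at hZsum
  have hOsum := chiSum_add_chiSum_sdiff w (hO₀ ▸ Set.sep_subset Z _ : O₀ ⊆ Z)
  have hw0 : w ≠ 0 := fun h => hw (by simp [h])
  rcases sum_chi4_of_Qform_eq_zero hc hα (by omega) hjodd hjl hw0 with hN | hN
  · left
    linear_combination hOsum + hZsum - hval + hN
  · right
    linear_combination hOsum + hZsum - hval + hN
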